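/- arXiv:2512.14912 — 4 statements merged into one kernel-verified Lean document; each statement's English description precedes it below -/
import Mathlib

section
/- Let ω be an integrable real-valued random variable and let Ω_1, …, Ω_W be measurable sets partitioning ℝ with p_i := P(ω ∈ Ω_i) > 0 for each i. Set m_i := E[ω | ω ∈ Ω_i]. Then for every y ∈ ℝ, Σ_{i=1}^W p_i · max(m_i − y, 0) ≤ E[max(ω − y, 0)] (Jensen lower bound for the first-order loss function). -/
open MeasureTheory ProbabilityTheory

/-- Jensen lower bound for the first-order loss function: given a measurable partition
`Ω_1, …, Ω_W` of ℝ with `p_i := P(ω ∈ Ω_i) > 0` and conditional means `m_i := E[ω | ω ∈ Ω_i]`,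
for every y, `Σ_i p_i · max(m_i − y, 0) ≤ E[max(ω − y, 0)]`. -/
theorem jensen_lower_bound_loss {Ω : Type*} [MeasurableSpace Ω] (μ : Measure Ω)
    [IsProbabilityMeasure μ] (X : Ω → ℝ) (hXmeas : Measurable X) (hXint : Integrable X μ)
    (W : ℕ) (S : Fin W → Set ℝ) (hSmeas : ∀ i, MeasurableSet (S i))
    (hSdisj : Pairwise (Function.onFun Disjoint S)) (hScover : (⋃ i, S i) = Set.univ)
    (p : Fin W → ℝ) (hp : ∀ i, p i = (μ (X ⁻¹' S i)).toReal) (hppos : ∀ i, 0 < p i)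
    (m : Fin W → ℝ) (hm : ∀ i, m i = ∫ a, X a ∂(μ[|X ⁻¹' S i])) (y : ℝ) :
    ∑ i, p i * max (m i - y) 0 ≤ ∫ a, max (X a - y) 0 ∂μ := by
  set A : Fin W → Set Ω := fun i => X ⁻¹' S i with hA
  have hAmeas : ∀ i, MeasurableSet (A i) := fun i => hXmeas (hSmeas i)
  have hAdisj : Pairwise (Function.onFun Disjoint A) := fun i j hij =>
    (hSdisj hij).preimage X
  have hAcover : (⋃ i, A i) = Set.univ := by
    rw [hA]
    simp only [← Set.preimage_iUnion, hScover, Set.preimage_univ]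
  set f : Ω → ℝ := fun a => max (X a - y) 0 with hf
  have hgint : Integrable (fun a => X a - y) μ := hXint.sub (integrable_const y)
  have hfint : Integrable f μ := hgint.pos_part
  -- rewrite total integral as a sum of set integrals
  have hsum : ∫ a, f a ∂μ = ∑ i, ∫ a in A i, f a ∂μ := by
    rw [← integral_iUnion_fintype hAmeas hAdisj (fun i => hfint.integrableOn), hAcover,
      Measure.restrict_univ]
  rw [hsum]
  apply Finset.sum_le_sum
  intro i _
  have hpμ : μ (A i) ≠ 0 := by
    intro h
    have := hppos i
    rw [hp i, h] at this
    simp at this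
  have hpfin : μ (A i) ≠ ⊤ := measure_ne_top μ _
  -- compute p i * m i = ∫ a in A i, X a ∂μ
  have hmi : p i * m i = ∫ a in A i, X a ∂μ := by
    rw [hm i, hp i, ProbabilityTheory.cond, integral_smul_measure, smul_eq_mul,
      ENNReal.toReal_inv, ← mul_assoc, mul_inv_cancel₀, one_mul]
    exact ENNReal.toReal_ne_zero.mpr ⟨hpμ, hpfin⟩
  have hpnn : (0:ℝ) ≤ p i := (hppos i).le
  have h1 : p i * max (m i - y) 0 = max (p i * (m i - y)) 0 := by
    rw [mul_max_of_nonneg _ _ hpnn, mul_zero]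
  have h2 : p i * (m i - y) = ∫ a in A i, (X a - y) ∂μ := by
    rw [integral_sub hXint.integrableOn (integrable_const y).integrableOn,
      setIntegral_const, mul_sub, hmi, hp i, smul_eq_mul, mul_comm]
    congr 1
    exact mul_comm _ _
  rw [h1, h2]
  have hle : ∫ a in A i, (X a - y) ∂μ ≤ ∫ a in A i, f a ∂μ :=
    setIntegral_mono_on (hgint.integrableOn) (hfint.integrableOn) (hAmeas i)
      (fun a _ => le_max_left _ _)
  have hnn : (0:ℝ) ≤ ∫ a in A i, f a ∂μ :=
    integral_nonneg (fun a => le_max_right _ _)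
  exact max_le hle hnn
end

section
/- Let ζ be a normal random variable with mean μ and standard deviation σ > 0. Let ṗ_1, …, ṗ_W > 0 and ṁ_1 < ⋯ < ṁ_W be the probabilities and conditional means of a measurable partition of ℝ for the standard normal random variable Z. Then for each i ∈ {1, …, W−1} and every y with μ + σ·ṁ_i ≤ y ≤ μ + σ·ṁ_{i+1}, one has σ · Σ_{k=1}^W ṗ_k · max(ṁ_k − (y−μ)/σ, 0) = σ · Σ_{k=i+1}^W ṗ_k ṁ_k − (y − μ) · Σ_{k=i+1}^W ṗ_k, and this quantity is a lower bound for E[max(ζ − y, 0)]. -/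
open MeasureTheory ProbabilityTheory Real

lemma integrable_id_gauss01 : Integrable (fun x : ℝ => x) (gaussianReal 0 1) := by
  have key : Integrable (fun x : ℝ => x ^ (1:ℝ) * rexp (-(2⁻¹:ℝ) * x ^ 2)) :=
    integrable_rpow_mul_exp_neg_mul_sq (by norm_num) (by norm_num)
  simp only [Real.rpow_one] at key
  rw [gaussianReal_of_var_ne_zero 0 one_ne_zero, gaussianPDF_def,
    integrable_withDensity_iff (measurable_gaussianPDFReal 0 1).ennreal_ofReal
      (ae_of_all _ fun _ => ENNReal.ofReal_lt_top)]
  refine (key.const_mul ((√(2*π))⁻¹)).congr (ae_of_all _ fun x => ?_)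
  simp only
  rw [ENNReal.toReal_ofReal (gaussianPDFReal_nonneg 0 1 x), gaussianPDFReal]
  push_cast
  rw [mul_one, sub_zero]
  rw [show -x ^ 2 / (2 * 1) = -(2⁻¹:ℝ) * x ^ 2 by ring]
  ring

lemma gauss_map (μ σ : ℝ) :
    gaussianReal μ ⟨σ ^ 2, sq_nonneg σ⟩ = (gaussianReal 0 1).map (fun z => σ * z + μ) := by
  have h1 : (gaussianReal 0 1).map (σ * ·) = gaussianReal 0 ⟨σ^2, sq_nonneg σ⟩ := by
    rw [gaussianReal_map_const_mul]
    norm_num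
    rfl
  have h2 := gaussianReal_map_add_const (μ := 0) (v := ⟨σ^2, sq_nonneg σ⟩) μ
  rw [← h1, Measure.map_map (measurable_add_const μ) (measurable_const_mul σ),
    zero_add] at h2
  rw [← h2]
  rfl

/-- Standardized Jensen lower bound for a normal random variable ζ with mean μ and standard
deviation σ > 0: given a measurable partition of ℝ with probabilities `ṗ_k > 0` and strictly
increasing conditional means `ṁ_k` for the standard normal `Z`, for each `i` and every
`y ∈ [μ + σ ṁ_i, μ + σ ṁ_{i+1}]`,
`σ Σ_k ṗ_k max(ṁ_k − (y−μ)/σ, 0) = σ Σ_{k>i} ṗ_k ṁ_k − (y−μ) Σ_{k>i} ṗ_k`,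
and this quantity is a lower bound for `E[max(ζ − y, 0)]`. -/
theorem standardized_jensen_lb (μ σ : ℝ) (hσ : 0 < σ) (W : ℕ)
    (S : Fin W → Set ℝ) (hSmeas : ∀ k, MeasurableSet (S k))
    (hSdisj : Pairwise (Function.onFun Disjoint S)) (hScover : (⋃ k, S k) = Set.univ)
    (p : Fin W → ℝ) (hp : ∀ k, p k = ((gaussianReal 0 1) (S k)).toReal)
    (hppos : ∀ k, 0 < p k)
    (m : Fin W → ℝ) (hm : ∀ k, m k = ∫ z, z ∂((gaussianReal 0 1)[|S k]))
    (hmono : StrictMono m)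
    (i : Fin W) (hi : i.val + 1 < W)
    (y : ℝ) (hy1 : μ + σ * m i ≤ y) (hy2 : y ≤ μ + σ * m ⟨i.val + 1, hi⟩) :
    σ * ∑ k, p k * max (m k - (y - μ) / σ) 0 =
      σ * (∑ k ∈ Finset.filter (fun k => i < k) Finset.univ, p k * m k) -
        (y - μ) * (∑ k ∈ Finset.filter (fun k => i < k) Finset.univ, p k) ∧
    σ * ∑ k, p k * max (m k - (y - μ) / σ) 0 ≤
      ∫ x, max (x - y) 0 ∂(gaussianReal μ ⟨σ ^ 2, sq_nonneg σ⟩) := by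
  set γ : Measure ℝ := gaussianReal 0 1 with hγ
  set t : ℝ := (y - μ) / σ with ht
  have hσt : σ * t = y - μ := by rw [ht]; field_simp [hσ.ne']
  have hmi : m i ≤ t := by
    rw [ht, le_div_iff₀ hσ]
    linarith
  have hmi1 : t ≤ m ⟨i.val + 1, hi⟩ := by
    rw [ht, div_le_iff₀ hσ]
    linarith
  -- the sum reduces to the filtered sum
  have hmax_le : ∀ k, ¬ i < k → max (m k - t) 0 = 0 := by
    intro k hk
    have : m k ≤ m i := hmono.monotone (not_lt.mp hk)
    exact max_eq_right (by linarith)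
  have hmax_gt : ∀ k, i < k → max (m k - t) 0 = m k - t := by
    intro k hk
    have hle : (⟨i.val + 1, hi⟩ : Fin W) ≤ k := by
      rw [Fin.le_def]
      exact hk
    have : m ⟨i.val + 1, hi⟩ ≤ m k := hmono.monotone hle
    exact max_eq_left (by linarith)
  have hsum : ∑ k, p k * max (m k - t) 0 =
      ∑ k ∈ Finset.filter (fun k => i < k) Finset.univ, p k * (m k - t) := by
    rw [← Finset.sum_filter_add_sum_filter_not Finset.univ (fun k => i < k)]
    have h0 : ∑ k ∈ Finset.filter (fun k => ¬ i < k) Finset.univ, p k * max (m k - t) 0 = 0 := by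
      refine Finset.sum_eq_zero fun k hk => ?_
      rw [hmax_le k (Finset.mem_filter.mp hk).2, mul_zero]
    rw [h0, add_zero]
    exact Finset.sum_congr rfl fun k hk => by
      rw [hmax_gt k (Finset.mem_filter.mp hk).2]
  constructor
  · rw [hsum]
    have hsplit2 : ∑ k ∈ Finset.filter (fun k => i < k) Finset.univ, p k * (m k - t) =
        (∑ k ∈ Finset.filter (fun k => i < k) Finset.univ, p k * m k) -
          t * ∑ k ∈ Finset.filter (fun k => i < k) Finset.univ, p k := by
      rw [Finset.mul_sum, ← Finset.sum_sub_distrib]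
      exact Finset.sum_congr rfl fun k _ => by ring
    rw [hsplit2, mul_sub, ← mul_assoc, hσt]
  · -- the lower bound
    have hid : Integrable (fun z : ℝ => z) γ := integrable_id_gauss01
    have hsubInt : Integrable (fun z : ℝ => z - t) γ := hid.sub (integrable_const t)
    have hInt : Integrable (fun z : ℝ => max (z - t) 0) γ := hsubInt.pos_part
    -- rewrite the RHS integral
    have hrhs : ∫ x, max (x - y) 0 ∂(gaussianReal μ ⟨σ ^ 2, sq_nonneg σ⟩)
        = σ * ∫ z, max (z - t) 0 ∂γ := by
      rw [gauss_map μ σ, integral_map ((measurable_const_mul σ).add_const μ).aemeasurable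
        (Measurable.aestronglyMeasurable (by fun_prop))]
      rw [← integral_const_mul]
      congr 1 with z
      rw [mul_max_of_nonneg _ _ hσ.le, mul_zero, mul_sub, hσt]
      ring_nf
    rw [hrhs]
    refine mul_le_mul_of_nonneg_left ?_ hσ.le
    -- split the integral over the partition
    have hsplit : ∫ z, max (z - t) 0 ∂γ = ∑ k, ∫ z in S k, max (z - t) 0 ∂γ := by
      rw [← integral_iUnion_fintype hSmeas hSdisj (fun k => hInt.integrableOn), hScover,
        Measure.restrict_univ]
    rw [hsplit]
    refine Finset.sum_le_sum fun k _ => ?_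
    -- p k * m k = ∫_{S k} z
    have hpk : p k ≠ 0 := (hppos k).ne'
    have hpm : p k * m k = ∫ z in S k, z ∂γ := by
      rw [hm k, ProbabilityTheory.cond, integral_smul_measure, smul_eq_mul, ← mul_assoc,
        ENNReal.toReal_inv, ← hp k, mul_inv_cancel₀ hpk, one_mul]
    have hps : (γ (S k)).toReal = p k := (hp k).symm
    have hint_sub : p k * (m k - t) = ∫ z in S k, (z - t) ∂γ := by
      rw [integral_sub hid.integrableOn (integrable_const t).integrableOn,
        setIntegral_const, measureReal_def, hps, smul_eq_mul]
      rw [← hpm]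
      ring
    calc p k * max (m k - t) 0 = max (p k * (m k - t)) 0 := by
          rw [mul_max_of_nonneg _ _ (hppos k).le, mul_zero]
      _ ≤ ∫ z in S k, max (z - t) 0 ∂γ := by
          rw [hint_sub]
          refine max_le ?_ ?_
          · exact setIntegral_mono_on hsubInt.integrableOn hInt.integrableOn (hSmeas k)
              fun z _ => le_max_left _ _
          · exact setIntegral_nonneg (hSmeas k) fun z _ => le_max_right _ _
end

section
/- Let V_max > 0, let Q be a positive integer, set s := V_max/Q and breakpoints b_k := k·s for k = 0, …, Q, and let ψ(v) be the piecewise-linear function which on each interval [b_{k−1}, b_k] equals the chord √(b_{k−1}) + ((√(b_k) − √(b_{k−1}))/(b_k − b_{k−1}))·(v − b_{k−1}). Then 0 ≤ √v − ψ(v) ≤ √s / 4 for all v ∈ [0, V_max], and sup_{v ∈ [0, V_max]} (√v − ψ(v)) = √s / 4. -/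
/-- Let `V_max > 0`, `Q` a positive integer, `s := V_max/Q`, breakpoints `b_k := k s`, and let
ψ be the piecewise-linear function equal on each `[b_{k−1}, b_k]` to the chord of √.
Then `0 ≤ √v − ψ(v) ≤ √s / 4` for all `v ∈ [0, V_max]`, and the supremum of `√v − ψ(v)` over
`[0, V_max]` equals `√s / 4` (and is attained). -/
theorem sqrt_piecewise_chord_error (Vmax : ℝ) (hV : 0 < Vmax) (Q : ℕ) (hQ : 0 < Q)
    (s : ℝ) (hs : s = Vmax / Q) (ψ : ℝ → ℝ)
    (hψ : ∀ k : ℕ, 1 ≤ k → k ≤ Q → ∀ v ∈ Set.Icc (((k : ℝ) - 1) * s) ((k : ℝ) * s),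
      ψ v = Real.sqrt (((k : ℝ) - 1) * s) +
        (Real.sqrt ((k : ℝ) * s) - Real.sqrt (((k : ℝ) - 1) * s)) /
          ((k : ℝ) * s - ((k : ℝ) - 1) * s) * (v - ((k : ℝ) - 1) * s)) :
    (∀ v ∈ Set.Icc (0 : ℝ) Vmax,
      0 ≤ Real.sqrt v - ψ v ∧ Real.sqrt v - ψ v ≤ Real.sqrt s / 4) ∧
    IsGreatest ((fun v => Real.sqrt v - ψ v) '' Set.Icc (0 : ℝ) Vmax)
      (Real.sqrt s / 4) := by
  have hQ' : (0 : ℝ) < Q := by exact_mod_cast hQ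
  have hs0 : 0 < s := by rw [hs]; positivity
  have hsV : s ≤ Vmax := by
    rw [hs]
    exact div_le_self hV.le (by exact_mod_cast hQ)
  have key : ∀ v ∈ Set.Icc (0 : ℝ) Vmax,
      0 ≤ Real.sqrt v - ψ v ∧ Real.sqrt v - ψ v ≤ Real.sqrt s / 4 := by
    rintro v ⟨hv0, hvV⟩
    set k : ℕ := max 1 ⌈v / s⌉₊ with hkdef
    have hk1 : 1 ≤ k := le_max_left _ _
    have hkQ : k ≤ Q := by
      refine max_le hQ (Nat.ceil_le.mpr ?_)
      rw [div_le_iff₀ hs0, hs]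
      have hc : (Q : ℝ) * (Vmax / Q) = Vmax := by field_simp
      linarith
    have hk1R : (1 : ℝ) ≤ (k : ℝ) := by exact_mod_cast hk1
    have hlow : ((k : ℝ) - 1) * s ≤ v := by
      rcases le_or_gt ⌈v / s⌉₊ 1 with h | h
      · have : k = 1 := by simp [hkdef, max_eq_left h]
        rw [this]; norm_num; exact hv0
      · have hk : k = ⌈v / s⌉₊ := max_eq_right h.le
        have h2 : k - 1 < ⌈v / s⌉₊ := by omega
        have h3 : ((k - 1 : ℕ) : ℝ) < v / s := Nat.lt_ceil.mp h2
        have h4 : ((k : ℝ) - 1) < v / s := by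
          rwa [Nat.cast_sub hk1, Nat.cast_one] at h3
        calc ((k : ℝ) - 1) * s ≤ (v / s) * s := by nlinarith
          _ = v := by field_simp
    have hhigh : v ≤ (k : ℝ) * s := by
      have h1 : v / s ≤ ⌈v / s⌉₊ := Nat.le_ceil _
      have h2 : (⌈v / s⌉₊ : ℝ) ≤ (k : ℝ) := by exact_mod_cast le_max_right 1 ⌈v / s⌉₊
      calc v = (v / s) * s := by field_simp
        _ ≤ (k : ℝ) * s := by nlinarith
    have hψv := hψ k hk1 hkQ v ⟨hlow, hhigh⟩
    set a : ℝ := ((k : ℝ) - 1) * s with hadef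
    set b : ℝ := (k : ℝ) * s with hbdef
    have ha0 : 0 ≤ a := mul_nonneg (by linarith) hs0.le
    have hsb : s ≤ b := by nlinarith
    set p := Real.sqrt a with hpdef
    set q := Real.sqrt b with hqdef
    set x := Real.sqrt v with hxdef
    have hp0 : 0 ≤ p := Real.sqrt_nonneg _
    have hq0 : 0 ≤ q := Real.sqrt_nonneg _
    have hx0 : 0 ≤ x := Real.sqrt_nonneg _
    have hc0 : 0 ≤ Real.sqrt s := Real.sqrt_nonneg _
    have hp2 : p ^ 2 = a := Real.sq_sqrt ha0
    have hq2 : q ^ 2 = b := Real.sq_sqrt (le_trans hs0.le hsb)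
    have hx2 : x ^ 2 = v := Real.sq_sqrt hv0
    have hc2 : (Real.sqrt s) ^ 2 = s := Real.sq_sqrt hs0.le
    have hpx : p ≤ x := Real.sqrt_le_sqrt hlow
    have hxq : x ≤ q := Real.sqrt_le_sqrt hhigh
    have hsq : q ^ 2 - p ^ 2 = s := by rw [hp2, hq2]; ring
    have hba : b - a = s := by rw [hadef, hbdef]; ring
    have hdev : x - ψ v = (x - p) * (q - p) * (q - x) / s := by
      rw [hψv, hba, eq_div_iff hs0.ne']
      have hss : (q - p) / s * (v - a) * s = (q - p) * (v - a) := by field_simp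
      linear_combination (-(1:ℝ)) * hss - (x - p) * hsq + (q - p) * hx2 - (q - p) * hp2
    clear_value x q p b a k
    show 0 ≤ x - ψ v ∧ x - ψ v ≤ Real.sqrt s / 4
    constructor
    · rw [hdev]
      have : 0 ≤ (x - p) * (q - p) * (q - x) :=
        mul_nonneg (mul_nonneg (by linarith) (by linarith)) (by linarith)
      positivity
    · rw [hdev, div_le_div_iff₀ hs0 (by norm_num : (0:ℝ) < 4)]
      -- goal: (x - p) * (q - p) * (q - x) * 4 ≤ √s * s
      clear hψ hψv hdev hkdef hadef hbdef hpdef hqdef hxdef hlow hhigh hba hp2 hq2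
      clear hx2 hs hsV hv0 hvV hk1R hQ' ha0 hsb hk1 hkQ hQ hV
      clear k a b v Vmax ψ Q
      have hL0 : 0 ≤ (x - p) * (q - p) * (q - x) * 4 :=
        mul_nonneg (mul_nonneg (mul_nonneg (by linarith) (by linarith)) (by linarith))
          (by norm_num)
      have hR0 : 0 ≤ Real.sqrt s * s := mul_nonneg hc0 hs0.le
      have hsqr : ((x - p) * (q - p) * (q - x) * 4) ^ 2 ≤ (Real.sqrt s * s) ^ 2 := by
        have h1 : 4 * ((x - p) * (q - x)) ≤ (q - p) ^ 2 := by nlinarith [sq_nonneg ((x - p) - (q - x))]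
        have h2 : (q - p) ^ 3 ≤ (q + p) ^ 3 := by nlinarith [sq_nonneg (q - p), sq_nonneg (q + p), sq_nonneg p]
        have h3 : (Real.sqrt s * s) ^ 2 = s ^ 3 := by
          rw [mul_pow, hc2]; ring
        rw [h3, ← hsq]
        have hqp0 : 0 ≤ q - p := by linarith
        calc ((x - p) * (q - p) * (q - x) * 4) ^ 2
            = (4 * ((x - p) * (q - x))) ^ 2 * (q - p) ^ 2 := by ring
          _ ≤ ((q - p) ^ 2) ^ 2 * (q - p) ^ 2 := by
              gcongr
          _ = (q - p) ^ 3 * (q - p) ^ 3 := by ring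
          _ ≤ (q - p) ^ 3 * (q + p) ^ 3 := by
              exact mul_le_mul_of_nonneg_left h2 (pow_nonneg hqp0 3)
          _ = (q ^ 2 - p ^ 2) ^ 3 := by ring
      nlinarith [hsqr, hL0, hR0]
  refine ⟨key, ?_, ?_⟩
  · -- √s/4 is attained at v = s/4
    refine ⟨s / 4, ⟨by positivity, by linarith⟩, ?_⟩
    have hmem : s / 4 ∈ Set.Icc ((((1:ℕ) : ℝ) - 1) * s) (((1:ℕ) : ℝ) * s) := by
      constructor <;> norm_num <;> linarith
    have hψ1 := hψ 1 le_rfl hQ (s / 4) hmem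
    have hsqrt4 : Real.sqrt (s / 4) = Real.sqrt s / 2 := by
      rw [show s / 4 = s / 4 by rfl, Real.sqrt_div hs0.le,
        show (4:ℝ) = 2 ^ 2 by norm_num, Real.sqrt_sq (by norm_num : (0:ℝ) ≤ 2)]
    show Real.sqrt (s / 4) - ψ (s / 4) = Real.sqrt s / 4
    rw [hψ1, hsqrt4]
    norm_num
    field_simp
    ring
  · rintro y ⟨v, hv, rfl⟩
    exact (key v hv).2
end

section
/- Let ω be an integrable real-valued random variable, let Ω_1, …, Ω_W be measurable sets partitioning ℝ with p_i := P(ω ∈ Ω_i) > 0, and let m_1 ≤ m_2 ≤ ⋯ ≤ m_W with m_i := E[ω | ω ∈ Ω_i]. Define L(y) := E[max(ω − y, 0)] and L_lb(y) := Σ_{i=1}^W p_i · max(m_i − y, 0). Then the supremum over y ∈ ℝ of the approximation error L(y) − L_lb(y) is attained at one of the breakpoints m_1, …, m_W; that is, sup_{y ∈ ℝ} (L(y) − L_lb(y)) = max_{i=1,…,W} (L(m_i) − L_lb(m_i)). -/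
open MeasureTheory ProbabilityTheory

/-- The supremum over y ∈ ℝ of the approximation error `L(y) − L_lb(y)` between the
first-order loss function `L(y) = E[max(ω − y, 0)]` and its Jensen lower bound
`L_lb(y) = Σ_i p_i max(m_i − y, 0)` is attained at one of the breakpoints `m_1, …, m_W`:
`sup_y (L(y) − L_lb(y)) = max_i (L(m_i) − L_lb(m_i))`. -/
theorem jensen_error_attained_at_breakpoints {Ω : Type*} [MeasurableSpace Ω]
    (μ : Measure Ω) [IsProbabilityMeasure μ]
    (X : Ω → ℝ) (hXmeas : Measurable X) (hXint : Integrable X μ)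
    (W : ℕ) (hW : 0 < W) (S : Fin W → Set ℝ) (hSmeas : ∀ i, MeasurableSet (S i))
    (hSdisj : Pairwise (Function.onFun Disjoint S)) (hScover : (⋃ i, S i) = Set.univ)
    (p : Fin W → ℝ) (hp : ∀ i, p i = (μ (X ⁻¹' S i)).toReal) (hppos : ∀ i, 0 < p i)
    (m : Fin W → ℝ) (hm : ∀ i, m i = ∫ a, X a ∂(μ[|X ⁻¹' S i])) (hmono : Monotone m)
    (L Llb : ℝ → ℝ)
    (hL : ∀ y, L y = ∫ a, max (X a - y) 0 ∂μ)
    (hLlb : ∀ y, Llb y = ∑ i, p i * max (m i - y) 0) :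
    (∃ i : Fin W, ∀ y : ℝ, L y - Llb y ≤ L (m i) - Llb (m i)) ∧
    (⨆ y : ℝ, (L y - Llb y)) = ⨆ i : Fin W, (L (m i) - Llb (m i)) := by
  haveI : NeZero W := ⟨hW.ne'⟩
  -- integrability of the truncated functions
  have hInt : ∀ c : ℝ, Integrable (fun a => max (X a - c) 0) μ := fun c =>
    (hXint.sub (integrable_const c)).sup (integrable_const (0 : ℝ))
  -- L is antitone
  have hLanti : ∀ {z y : ℝ}, z ≤ y → L y ≤ L z := by
    intro z y hzy
    rw [hL, hL]
    exact integral_mono (hInt y) (hInt z) fun a => max_le_max (by linarith) le_rfl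
  -- L is 1-Lipschitz (one-sided version suffices)
  have hLip : ∀ y z : ℝ, L y - L z ≤ |z - y| := by
    intro y z
    rw [hL, hL, ← integral_sub (hInt y) (hInt z)]
    have hpt : ∀ a : Ω, max (X a - y) 0 - max (X a - z) 0 ≤ |z - y| := by
      intro a
      have h := abs_max_sub_max_le_abs (X a - y) (X a - z) 0
      have h2 : (X a - y) - (X a - z) = z - y := by ring
      rw [h2] at h
      calc max (X a - y) 0 - max (X a - z) 0
          ≤ |max (X a - y) 0 - max (X a - z) 0| := le_abs_self _
        _ ≤ |z - y| := h
    calc ∫ a, (max (X a - y) 0 - max (X a - z) 0) ∂μ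
        ≤ ∫ _, |z - y| ∂μ :=
          integral_mono ((hInt y).sub (hInt z)) (integrable_const _) hpt
      _ = |z - y| := by simp
  -- L is convex
  have hconv : ∀ (t a b : ℝ), 0 ≤ t → t ≤ 1 →
      L ((1 - t) * a + t * b) ≤ (1 - t) * L a + t * L b := by
    intro t a b ht ht1
    rw [hL, hL, hL]
    have hptw : ∀ x : Ω, max (X x - ((1 - t) * a + t * b)) 0
        ≤ (1 - t) * max (X x - a) 0 + t * max (X x - b) 0 := by
      intro x
      refine max_le ?_ (add_nonneg (mul_nonneg (by linarith) (le_max_right _ _))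
        (mul_nonneg ht (le_max_right _ _)))
      have h1 : (1 - t) * (X x - a) ≤ (1 - t) * max (X x - a) 0 :=
        mul_le_mul_of_nonneg_left (le_max_left _ _) (by linarith)
      have h2 : t * (X x - b) ≤ t * max (X x - b) 0 :=
        mul_le_mul_of_nonneg_left (le_max_left _ _) ht
      nlinarith
    calc ∫ x, max (X x - ((1 - t) * a + t * b)) 0 ∂μ
        ≤ ∫ x, ((1 - t) * max (X x - a) 0 + t * max (X x - b) 0) ∂μ :=
          integral_mono (hInt _) (((hInt a).const_mul _).add ((hInt b).const_mul _)) hptw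
      _ = (1 - t) * ∫ x, max (X x - a) 0 ∂μ + t * ∫ x, max (X x - b) 0 ∂μ := by
          rw [integral_add ((hInt a).const_mul _) ((hInt b).const_mul _),
            integral_const_mul, integral_const_mul]
  -- the probabilities sum to one
  have hsum1 : ∑ i, p i = 1 := by
    have hpre : ∀ i, MeasurableSet (X ⁻¹' S i) := fun i => hXmeas (hSmeas i)
    have hd : Pairwise (Function.onFun Disjoint fun i => X ⁻¹' S i) :=
      fun i j hij => (hSdisj hij).preimage X
    have hu : (⋃ i, X ⁻¹' S i) = Set.univ := by
      rw [← Set.preimage_iUnion, hScover, Set.preimage_univ]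
    have h2 : ∑ i, μ (X ⁻¹' S i) = 1 := by
      rw [← tsum_fintype (L := SummationFilter.unconditional (Fin W)), ← measure_iUnion hd hpre, hu, measure_univ]
    calc ∑ i, p i = ∑ i, (μ (X ⁻¹' S i)).toReal := by simp [hp]
      _ = (∑ i, μ (X ⁻¹' S i)).toReal :=
          (ENNReal.toReal_sum fun i _ => measure_ne_top μ _).symm
      _ = 1 := by rw [h2]; simp
  -- the optimal breakpoint
  obtain ⟨iopt, hiopt⟩ := Finite.exists_max (fun j : Fin W => L (m j) - Llb (m j))
  have i0 : Fin W := ⟨0, hW⟩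
  -- main claim
  have main : ∀ y : ℝ, L y - Llb y ≤ L (m iopt) - Llb (m iopt) := by
    intro y
    set i0 : Fin W := ⟨0, hW⟩ with hi0
    by_cases hy0 : y ≤ m i0
    · -- left tail
      have hLlbdiff : Llb y - Llb (m i0) = m i0 - y := by
        rw [hLlb, hLlb, ← Finset.sum_sub_distrib]
        have : ∀ j : Fin W, p j * max (m j - y) 0 - p j * max (m j - m i0) 0
            = p j * (m i0 - y) := by
          intro j
          have hj : m i0 ≤ m j := hmono (by exact Fin.mk_le_of_le_val (Nat.zero_le _))
          rw [max_eq_left (by linarith), max_eq_left (by linarith)]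
          ring
        rw [Finset.sum_congr rfl fun j _ => this j, ← Finset.sum_mul, hsum1, one_mul]
      have hLdiff : L y - L (m i0) ≤ m i0 - y := by
        have := hLip y (m i0)
        rwa [abs_of_nonneg (by linarith)] at this
      have := hiopt i0
      linarith
    · push_neg at hy0
      set s : Finset (Fin W) := Finset.univ.filter (fun i => m i ≤ y) with hs
      have hsne : s.Nonempty := ⟨i0, by simp [hs, hy0.le]⟩
      set i : Fin W := s.max' hsne with hidef
      have hmi : m i ≤ y := by
        have := s.max'_mem hsne
        simpa [hs] using this
      by_cases hnext : i.val + 1 < W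
      · -- middle interval
        set i' : Fin W := ⟨i.val + 1, hnext⟩ with hi'
        have hyi' : y < m i' := by
          by_contra h
          push_neg at h
          have hmem : i' ∈ s := by simp [hs, h]
          have := s.le_max' i' hmem
          rw [← hidef] at this
          have : i.val + 1 ≤ i.val := this
          omega
        have hab : m i < m i' := lt_of_le_of_lt hmi hyi'
        set t : ℝ := (y - m i) / (m i' - m i) with htdef
        have ht0 : 0 ≤ t := div_nonneg (by linarith) (by linarith)
        have ht1 : t ≤ 1 := (div_le_one (by linarith)).mpr (by linarith)
        have hy : y = (1 - t) * m i + t * m i' := by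
          have hne : m i' - m i ≠ 0 := sub_ne_zero.mpr (ne_of_gt hab)
          rw [htdef]
          field_simp
          ring
        have hA : L y ≤ (1 - t) * L (m i) + t * L (m i') := by
          have := hconv t (m i) (m i') ht0 ht1
          rwa [← hy] at this
        have hB : Llb y = (1 - t) * Llb (m i) + t * Llb (m i') := by
          rw [hLlb, hLlb, hLlb, Finset.mul_sum, Finset.mul_sum, ← Finset.sum_add_distrib]
          refine Finset.sum_congr rfl fun j _ => ?_
          rcases le_or_gt j i with hj | hj
          · have h1 : m j ≤ m i := hmono hj
            rw [max_eq_right (by linarith), max_eq_right (by linarith : m j - m i ≤ 0),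
              max_eq_right (by linarith : m j - m i' ≤ 0)]
            ring
          · have h2 : i' ≤ j := by
              have : i.val + 1 ≤ j.val := hj
              exact this
            have h3 : m i' ≤ m j := hmono h2
            rw [max_eq_left (by linarith), max_eq_left (by linarith),
              max_eq_left (by linarith)]
            rw [hy]; ring
        have e1 : (1 - t) * (L (m i) - Llb (m i))
            ≤ (1 - t) * (L (m iopt) - Llb (m iopt)) :=
          mul_le_mul_of_nonneg_left (hiopt i) (by linarith)
        have e2 : t * (L (m i') - Llb (m i'))
            ≤ t * (L (m iopt) - Llb (m iopt)) :=
          mul_le_mul_of_nonneg_left (hiopt i') ht0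
        nlinarith
      · -- right tail: i is the top breakpoint
        have htop : ∀ j : Fin W, m j ≤ m i := by
          intro j
          have hj : j.val ≤ i.val := by omega
          exact hmono hj
        have hLlby : Llb y = 0 := by
          rw [hLlb]
          refine Finset.sum_eq_zero fun j _ => ?_
          rw [max_eq_right (by linarith [htop j] : m j - y ≤ 0), mul_zero]
        have hLlbi : Llb (m i) = 0 := by
          rw [hLlb]
          refine Finset.sum_eq_zero fun j _ => ?_
          rw [max_eq_right (by linarith [htop j] : m j - m i ≤ 0), mul_zero]
        have hLle : L y ≤ L (m i) := hLanti hmi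
        have := hiopt i
        linarith
  refine ⟨⟨iopt, main⟩, ?_⟩
  apply le_antisymm
  · refine ciSup_le fun y => (main y).trans ?_
    exact le_ciSup (f := fun j : Fin W => L (m j) - Llb (m j))
      (Set.Finite.bddAbove (Set.finite_range _)) iopt
  · refine ciSup_le fun j => ?_
    have hbdd : BddAbove (Set.range fun y => L y - Llb y) := by
      refine ⟨L (m iopt) - Llb (m iopt), ?_⟩
      rintro _ ⟨y, rfl⟩
      exact main y
    exact le_ciSup hbdd (m j)
end
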